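/- arXiv:1512.01018 — 2 statements merged into one kernel-verified Lean document; each statement's English description precedes it below -/
import Mathlib

section
/- Let L be a finite-dimensional Lie algebra over a field F, let A be a quasi-minimal ideal of L and let B be an ideal of L. Then either A ⊆ B or A ⊆ C_L(B). -/
namespace Paper

open LieAlgebra

section AlgDefs

variable (F : Type*) [Field F] (L : Type*) [LieRing L] [LieAlgebra F L]

/-- The nilradical of a Lie algebra: the largest nilpotent ideal (the sup of nilpotent ideals). -/
noncomputable def nilrad : LieIdeal F L :=
  sSup {I : LieIdeal F L | LieModule.IsNilpotent I I}

/-- The nilpotency class of a Lie algebra. -/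
noncomputable def nilClass : ℕ := sInf {k | LieModule.lowerCentralSeries F L L k = ⊥}

/-- A Lie algebra is nilregular if the field has characteristic zero, or characteristic `p > 0`
and its nilradical has nilpotency class less than `p - 1`. -/
noncomputable def Nilregular : Prop :=
  ringChar F = 0 ∨ nilClass F (nilrad F L) < ringChar F - 1

/-- A Lie algebra is solregular if the field has characteristic zero, or characteristic `p > 0`
and its radical has derived length less than `log₂ p`. -/
noncomputable def Solregular : Prop :=
  ringChar F = 0 ∨ 2 ^ LieAlgebra.derivedLength F (LieAlgebra.radical F L) < ringChar F

/-- Regular means nilregular or solregular. -/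
noncomputable def Regular : Prop := Nilregular F L ∨ Solregular F L

end AlgDefs

section IdealDefs

variable {F : Type*} [Field F] {L : Type*} [LieRing L] [LieAlgebra F L]

/-- The centraliser `C_L(I)` of an ideal `I`, as an ideal of `L`. -/
def centralizer (I : LieIdeal F L) : LieIdeal F L where
  carrier := {x : L | ∀ y ∈ I, ⁅x, y⁆ = 0}
  zero_mem' := by intro y hy; simp
  add_mem' := by intro a b ha hb y hy; rw [add_lie, ha y hy, hb y hy, add_zero]
  smul_mem' := by intro c x hx y hy; rw [smul_lie, hx y hy, smul_zero]
  lie_mem := by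
    intro x m hm y hy
    have h1 : ⁅x, ⁅m, y⁆⁆ = (0 : L) := by rw [hm y hy, lie_zero]
    have h2 : ⁅m, ⁅x, y⁆⁆ = (0 : L) := hm _ (I.lie_mem hy)
    show ⁅⁅x, m⁆, y⁆ = (0 : L)
    rw [lie_lie, h1, h2, sub_zero]

/-- The centre `Z(I)` of an ideal `I`, as an ideal of `L`. -/
def idealCenter (I : LieIdeal F L) : LieIdeal F L where
  carrier := {x : L | x ∈ I ∧ ∀ y ∈ I, ⁅x, y⁆ = 0}
  zero_mem' := ⟨I.zero_mem, by intro y hy; simp⟩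
  add_mem' := by
    intro a b ha hb
    exact ⟨I.add_mem ha.1 hb.1, fun y hy => by rw [add_lie, ha.2 y hy, hb.2 y hy, add_zero]⟩
  smul_mem' := by
    intro c x hx
    exact ⟨I.smul_mem c hx.1, fun y hy => by rw [smul_lie, hx.2 y hy, smul_zero]⟩
  lie_mem := by
    intro x m hm
    refine ⟨I.lie_mem hm.1, fun y hy => ?_⟩
    have h1 : ⁅x, ⁅m, y⁆⁆ = (0 : L) := by rw [hm.2 y hy, lie_zero]
    have h2 : ⁅m, ⁅x, y⁆⁆ = (0 : L) := hm.2 _ (I.lie_mem hy)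
    show ⁅⁅x, m⁆, y⁆ = (0 : L)
    rw [lie_lie, h1, h2, sub_zero]

/-- The centraliser `C_L(A/B)` of a chief factor, as an ideal of `L`. -/
def chiefCentralizer (A B : LieIdeal F L) : LieIdeal F L where
  carrier := {x : L | ∀ a ∈ A, ⁅x, a⁆ ∈ B}
  zero_mem' := by intro a ha; simp [B.zero_mem]
  add_mem' := by intro x y hx hy a ha; rw [add_lie]; exact B.add_mem (hx a ha) (hy a ha)
  smul_mem' := by intro c x hx a ha; rw [smul_lie]; exact B.smul_mem c (hx a ha)
  lie_mem := by
    intro x m hm a ha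
    show ⁅⁅x, m⁆, a⁆ ∈ B
    rw [lie_lie]
    exact B.sub_mem (B.lie_mem (hm a ha)) (hm _ (A.lie_mem ha))

/-- `A/Z` is a minimal ideal of `L/Z` (via the ideal correspondence). -/
def IsMinModIdeal (Z A : LieIdeal F L) : Prop :=
  Z < A ∧ ∀ B : LieIdeal F L, Z ≤ B → B ≤ A → B = Z ∨ B = A

/-- `A` is a minimal ideal of `L`. -/
def IsMinimalIdeal (A : LieIdeal F L) : Prop := IsMinModIdeal ⊥ A

/-- An ideal `A` of `L` is quasi-minimal if `A² = A` and `A/Z(A)` is a minimal ideal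
of `L/Z(A)`. -/
def IsQuasiMinimal (A : LieIdeal F L) : Prop :=
  ⁅A, A⁆ = A ∧ IsMinModIdeal (idealCenter A) A

end IdealDefs

section MoreDefs

variable (F : Type*) [Field F] (L : Type*) [LieRing L] [LieAlgebra F L]

/-- `E†(L)`: the subalgebra generated by the quasi-minimal components of `L`. -/
noncomputable def Edagger : LieSubalgebra F L :=
  LieSubalgebra.lieSpan F L (⋃ A ∈ {A : LieIdeal F L | IsQuasiMinimal A}, (A : Set L))

/-- `N†(L) = N(L) + E†(L)`: the quasi-minimal radical of `L`. -/
noncomputable def Ndagger : LieSubalgebra F L :=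
  LieIdeal.toLieSubalgebra F L (nilrad F L) ⊔ Edagger F L

/-- The generalised nilradical `N*(L)`: the ideal containing `N = N(L)` with
`N*(L)/N` the sum of all minimal ideals of `L/N` contained in `(N + C_L(N))/N`. -/
noncomputable def Nstar : LieIdeal F L :=
  nilrad F L ⊔ sSup {A : LieIdeal F L | IsMinModIdeal (nilrad F L) A ∧
    A ≤ nilrad F L ⊔ centralizer (nilrad F L)}

/-- The Frattini ideal: the largest ideal contained in every maximal subalgebra. -/
def frattini : LieIdeal F L :=
  sSup {I : LieIdeal F L | ∀ M : LieSubalgebra F L, IsCoatom M → (I : Set L) ⊆ M}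

/-- `Ñ(L)`: the ideal with `Ñ(L)/φ(L) = Soc (L/φ(L))`. -/
noncomputable def Ntilde : LieIdeal F L :=
  frattini F L ⊔ sSup {A : LieIdeal F L | IsMinModIdeal (frattini F L) A}

/-- A characteristic ideal: one invariant under all derivations. -/
def IsCharIdeal (J : LieIdeal F L) : Prop :=
  ∀ D : LieDerivation F L L, ∀ x ∈ J, D x ∈ J

/-- The characteristic radical `R_c(L)`: the sum of all solvable characteristic ideals. -/
noncomputable def charRadical : LieIdeal F L :=
  sSup {J : LieIdeal F L | LieAlgebra.IsSolvable J ∧ IsCharIdeal F L J}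

/-- A subideal: a subalgebra joined to `L` by a chain of successive ideals. -/
def IsSubideal (S : LieSubalgebra F L) : Prop :=
  ∃ n : ℕ, ∃ c : Fin (n + 1) → LieSubalgebra F L,
    c 0 = S ∧ c (Fin.last n) = ⊤ ∧
    ∀ i : Fin n, c i.castSucc ≤ c i.succ ∧
      ∀ x ∈ c i.succ, ∀ y ∈ c i.castSucc, ⁅x, y⁆ ∈ c i.castSucc

end MoreDefs

/-! Put `Z = Z(A)`. By minimality of `A/Z`, the ideal `Z + (A ∩ B)` is `Z` or `A`. In the first
case `[A, B] ⊆ A ∩ B` is central in `A`, so by the Jacobi identity `A = [A, A]` centralises `B`.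
In the second case `[A, A] = [Z + (A ∩ B), A] = [A ∩ B, A] ⊆ B`. -/

section QuasiMinimal

variable {F : Type*} [Field F] {L : Type*} [LieRing L] [LieAlgebra F L]

theorem idealCenter_le (I : LieIdeal F L) : idealCenter I ≤ I := fun _ hx => hx.1

theorem lie_eq_zero_of_mem_idealCenter {I : LieIdeal F L} {x z : L} (hx : x ∈ I)
    (hz : z ∈ idealCenter I) : ⁅x, z⁆ = 0 := by
  rw [← lie_skew, hz.2 x hx, neg_zero]

theorem idealCenter_lie_eq_bot (I : LieIdeal F L) : ⁅idealCenter I, I⁆ = ⊥ :=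
  (LieSubmodule.lie_eq_bot_iff _ _).mpr fun _ hz _ hy => hz.2 _ hy

theorem le_centralizer_of_inf_le_idealCenter {A B : LieIdeal F L} (hA : ⁅A, A⁆ = A)
    (h : A ⊓ B ≤ idealCenter A) : A ≤ centralizer B := by
  have hcentral : ∀ x ∈ A, ∀ b ∈ B, ∀ y ∈ A, ⁅y, ⁅x, b⁆⁆ = 0 := fun x hx b hb y hy =>
    lie_eq_zero_of_mem_idealCenter hy (h (LieSubmodule.lie_le_inf A B
      (LieSubmodule.lie_mem_lie hx hb)))
  rw [← hA, LieSubmodule.lie_le_iff]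
  intro x hx y hy b hb
  rw [lie_lie, hcentral y hy b hb x hx, hcentral x hx b hb y hy, sub_zero]

theorem lie_self_le_of_idealCenter_sup_inf_eq {A B : LieIdeal F L}
    (h : idealCenter A ⊔ A ⊓ B = A) : ⁅A, A⁆ ≤ B :=
  calc ⁅A, A⁆ = ⁅idealCenter A ⊔ A ⊓ B, A⁆ := by rw [h]
    _ = ⁅A ⊓ B, A⁆ := by rw [LieSubmodule.sup_lie, idealCenter_lie_eq_bot, bot_sup_eq]
    _ ≤ A ⊓ B := LieSubmodule.lie_le_left _ _
    _ ≤ B := inf_le_right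

end QuasiMinimal

theorem stmt_9_general (F : Type*) [Field F] (L : Type*) [LieRing L] [LieAlgebra F L]
    (A B : LieIdeal F L) (hA : IsQuasiMinimal A) :
    A ≤ B ∨ A ≤ centralizer B := by
  obtain ⟨hAA, -, hmin⟩ := hA
  rcases hmin _ le_sup_left (sup_le (idealCenter_le A) inf_le_left) with h | h
  · exact Or.inr (le_centralizer_of_inf_le_idealCenter hAA (le_sup_right.trans h.le))
  · exact Or.inl (hAA.ge.trans (lie_self_le_of_idealCenter_sup_inf_eq h))

/-- If `A` is quasi-minimal and `B` is an ideal then `A ⊆ B` or `A ⊆ C_L(B)`. -/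
theorem stmt_9 (F : Type*) [Field F] (L : Type*) [LieRing L] [LieAlgebra F L]
    [FiniteDimensional F L] (A B : LieIdeal F L) (hA : IsQuasiMinimal A) :
    A ≤ B ∨ A ≤ centralizer B :=
  stmt_9_general F L A B hA

end Paper
end

section
/- Let L be a finite-dimensional Lie algebra over any field F, with nilradical N = N(L). Then N*(L) = N†(L). -/
namespace Paper

open LieAlgebra

/-!
The centre of an ideal is abelian, hence lies in `N`. For an ideal `E` centralising `N` this gives
`Z(E) = E ∩ N`, and in the modular lattice of ideals `E/(E ∩ N)` is minimal in `L/(E ∩ N)` exactly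
when `(E + N)/N` is minimal in `L/N`.

A quasi-minimal `A ⊄ N` has `A ∩ N = Z(A)`, so `[A, N] ⊆ Z(A)`; the Jacobi identity then makes
`[A, A] = A` centralise `N`, and `A + N` is one of the ideals summed in `N*(L)`.

Conversely, let `A/N` be minimal and contained in `(N + C_L(N))/N`, and let `E` be a minimal ideal
with `E ⊆ C_L(N)` and `E + N = A` (`A ∩ C_L(N)` is one). If `[E, E] ⊆ N`, then
`[E, [E, E]] ⊆ [E, N] = 0`, so `E` is nilpotent and `A = N`; hence `[E, E] + N = A`, and minimality
of `E` forces `[E, E] = E`. So `E` is quasi-minimal and `A = E + N ⊆ N†(L)`.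
-/

section Proofs

variable {F : Type*} [Field F] {L : Type*} [LieRing L] [LieAlgebra F L]

lemma isMinModIdeal_iff_covBy {Z A : LieIdeal F L} : IsMinModIdeal Z A ↔ Z ⋖ A :=
  covBy_iff_lt_and_eq_or_eq.symm

lemma le_centralizer_iff {I J : LieIdeal F L} : I ≤ centralizer J ↔ ⁅I, J⁆ = ⊥ := by
  rw [LieSubmodule.lie_eq_bot_iff]
  rfl

lemma idealCenter_le_self (A : LieIdeal F L) : idealCenter A ≤ A :=
  fun _ hx => hx.1

lemma isNilpotent_of_lie_lie_eq_bot {R : Type*} [CommRing R] [LieAlgebra R L]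
    {I : LieIdeal R L} (h : ⁅I, ⁅I, I⁆⁆ = ⊥) : LieModule.IsNilpotent I I := by
  rw [LieModule.isNilpotent_iff R]
  refine ⟨2, ?_⟩
  have hcentral : LieModule.lowerCentralSeries R I I 1 ≤ LieModule.maxTrivSubmodule R I I := by
    rw [LieModule.lowerCentralSeries_succ, LieModule.lowerCentralSeries_zero,
      LieSubmodule.lie_le_iff]
    intro y _ z _
    rw [LieModule.mem_maxTrivSubmodule]
    intro x
    ext
    rw [LieSubmodule.coe_zero, ← LieSubmodule.mem_bot (R := R) (L := L), ← h]
    exact LieSubmodule.lie_mem_lie x.2 (LieSubmodule.lie_mem_lie y.2 z.2)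
  rw [LieModule.lowerCentralSeries_succ, LieSubmodule.lie_eq_bot_iff]
  exact fun x _ m hm => hcentral hm x

lemma le_nilrad_of_lie_lie_eq_bot {I : LieIdeal F L} (h : ⁅I, ⁅I, I⁆⁆ = ⊥) :
    I ≤ nilrad F L :=
  le_sSup (isNilpotent_of_lie_lie_eq_bot h)

lemma idealCenter_le_nilrad (A : LieIdeal F L) : idealCenter A ≤ nilrad F L := by
  have habel : ⁅idealCenter A, idealCenter A⁆ = ⊥ :=
    (LieSubmodule.lie_eq_bot_iff _ _).mpr fun x hx y hy => hx.2 y hy.1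
  exact le_nilrad_of_lie_lie_eq_bot (by rw [habel, LieSubmodule.lie_bot])

lemma idealCenter_eq_inf_nilrad {E : LieIdeal F L} (hE : E ≤ centralizer (nilrad F L)) :
    idealCenter E = E ⊓ nilrad F L := by
  refine le_antisymm (le_inf (idealCenter_le_self E) (idealCenter_le_nilrad E)) ?_
  intro x hx
  exact ⟨hx.1, fun y hy => by rw [← lie_skew, hE hy x hx.2, neg_zero]⟩

lemma lie_le_centralizer_of_lie_le_idealCenter {A N : LieIdeal F L}
    (h : ⁅A, N⁆ ≤ idealCenter A) : ⁅A, A⁆ ≤ centralizer N := by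
  rw [LieSubmodule.lie_le_iff]
  intro x hx y hy n hn
  have hyn : ⁅y, n⁆ ∈ idealCenter A := h (LieSubmodule.lie_mem_lie hy hn)
  have hxn : ⁅x, n⁆ ∈ idealCenter A := h (LieSubmodule.lie_mem_lie hx hn)
  rw [lie_lie, ← lie_skew, hyn.2 x hx, ← lie_skew y, hxn.2 y hy, neg_zero, sub_zero]

lemma le_Nstar_of_isQuasiMinimal {A : LieIdeal F L} (hA : IsQuasiMinimal A) :
    A ≤ Nstar F L := by
  obtain ⟨hperf, hcov⟩ := hA
  rw [isMinModIdeal_iff_covBy] at hcov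
  rcases hcov.eq_or_eq (le_inf (idealCenter_le_self A) (idealCenter_le_nilrad A)) inf_le_left
    with hcenter | hle
  · have hAC : A ≤ centralizer (nilrad F L) :=
      hperf ▸ lie_le_centralizer_of_lie_le_idealCenter (hcenter ▸ LieSubmodule.lie_le_inf A _)
    have hsup : nilrad F L ⋖ A ⊔ nilrad F L := covBy_sup_of_inf_covBy_left (hcenter ▸ hcov)
    have hmem : A ⊔ nilrad F L ∈ {B : LieIdeal F L | IsMinModIdeal (nilrad F L) B ∧
        B ≤ nilrad F L ⊔ centralizer (nilrad F L)} :=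
      ⟨isMinModIdeal_iff_covBy.mpr hsup, sup_le (hAC.trans le_sup_right) le_sup_left⟩
    exact le_sup_left.trans ((le_sSup hmem).trans le_sup_right)
  · exact (inf_eq_left.mp hle).trans le_sup_left

lemma le_nilrad_of_le_centralizer {E : LieIdeal F L} (hE : E ≤ centralizer (nilrad F L))
    (h : ⁅E, E⁆ ≤ nilrad F L) : E ≤ nilrad F L := by
  refine le_nilrad_of_lie_lie_eq_bot (eq_bot_iff.mpr ?_)
  exact (LieSubmodule.mono_lie_right E h).trans (le_centralizer_iff.mp hE).le

lemma exists_isQuasiMinimal_sup_nilrad_eq [IsArtinian F L] {A : LieIdeal F L}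
    (hA : nilrad F L ⋖ A) (hAC : A ≤ nilrad F L ⊔ centralizer (nilrad F L)) :
    ∃ E : LieIdeal F L, IsQuasiMinimal E ∧ E ⊔ nilrad F L = A := by
  set N := nilrad F L
  set S := {X : LieIdeal F L | X ≤ centralizer N ∧ X ⊔ N = A}
  have hD : A ⊓ centralizer N ∈ S :=
    ⟨inf_le_right, by rw [inf_sup_assoc_of_le _ hA.le, sup_comm, inf_eq_left.mpr hAC]⟩
  have := LieSubmodule.wellFoundedLT_of_isArtinian F L L
  obtain ⟨E, ⟨hEC, hEN⟩, hmin⟩ := wellFounded_lt.has_min S ⟨_, hD⟩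
  have hEE : ⁅E, E⁆ ⊔ N = A := by
    refine (hA.eq_or_eq le_sup_right
      (sup_le ((LieSubmodule.lie_le_left E E).trans (hEN ▸ le_sup_left)) hA.le)).resolve_left ?_
    intro hN
    have hEle : E ≤ N := le_nilrad_of_le_centralizer hEC (le_sup_left.trans hN.le)
    exact hA.ne (hEN ▸ (sup_eq_right.mpr hEle)).symm
  have hperf : ⁅E, E⁆ = E := by
    by_contra hne
    exact hmin _ ⟨(LieSubmodule.lie_le_left E E).trans hEC, hEE⟩
      (lt_of_le_of_ne (LieSubmodule.lie_le_left E E) hne)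
  refine ⟨E, ⟨hperf, ?_⟩, hEN⟩
  rw [isMinModIdeal_iff_covBy, idealCenter_eq_inf_nilrad hEC, inf_comm]
  exact inf_covBy_of_covBy_sup_left (sup_comm E N ▸ hEN ▸ hA)

lemma coe_sup_subset {I J : LieIdeal F L} {K : LieSubalgebra F L} (hI : (I : Set L) ⊆ K)
    (hJ : (J : Set L) ⊆ K) : ((I ⊔ J : LieIdeal F L) : Set L) ⊆ K := by
  change (I ⊔ J : LieIdeal F L).toSubmodule ≤ K.toSubmodule
  rw [LieSubmodule.sup_toSubmodule]
  exact sup_le hI hJ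

lemma coe_sSup_subset {S : Set (LieIdeal F L)} {K : LieSubalgebra F L}
    (h : ∀ I ∈ S, (I : Set L) ⊆ K) : ((sSup S : LieIdeal F L) : Set L) ⊆ K := by
  change (sSup S : LieIdeal F L).toSubmodule ≤ K.toSubmodule
  rw [LieSubmodule.sSup_toSubmodule]
  exact sSup_le fun _ ⟨I, hI, hIJ⟩ => hIJ ▸ h I hI

lemma coe_nilrad_subset_Ndagger : (nilrad F L : Set L) ⊆ Ndagger F L :=
  fun _ hx => (le_sup_left : _ ≤ Ndagger F L) hx

lemma coe_subset_Ndagger_of_isQuasiMinimal {E : LieIdeal F L} (hE : IsQuasiMinimal E) :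
    (E : Set L) ⊆ Ndagger F L :=
  fun _ hx => (le_sup_right : Edagger F L ≤ Ndagger F L)
    (LieSubalgebra.subset_lieSpan (Set.mem_biUnion hE hx))

lemma coe_Nstar_subset_Ndagger [IsArtinian F L] :
    (Nstar F L : Set L) ⊆ Ndagger F L := by
  refine coe_sup_subset coe_nilrad_subset_Ndagger (coe_sSup_subset ?_)
  rintro A ⟨hA, hAC⟩
  obtain ⟨E, hE, rfl⟩ := exists_isQuasiMinimal_sup_nilrad_eq (isMinModIdeal_iff_covBy.mp hA) hAC
  exact coe_sup_subset (coe_subset_Ndagger_of_isQuasiMinimal hE) coe_nilrad_subset_Ndagger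

lemma Ndagger_le_Nstar : Ndagger F L ≤ LieIdeal.toLieSubalgebra F L (Nstar F L) := by
  refine sup_le (fun _ hx => (le_sup_left : nilrad F L ≤ Nstar F L) hx) ?_
  rw [Edagger, LieSubalgebra.lieSpan_le]
  exact Set.iUnion₂_subset fun _ hA => le_Nstar_of_isQuasiMinimal hA

end Proofs

/-- `N*(L) = N†(L)`. -/
theorem stmt_14 (F : Type*) [Field F] (L : Type*) [LieRing L] [LieAlgebra F L]
    [FiniteDimensional F L] :
    (Nstar F L : Set L) = (Ndagger F L : Set L) :=
  coe_Nstar_subset_Ndagger.antisymm fun _ hx => Ndagger_le_Nstar hx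

end Paper
end
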